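/- arXiv:1806.00983 — 2 statements merged into one kernel-verified Lean document; each statement's English description precedes it below -/
import Mathlib

section
/- Fix γ ∈ [0, 1/2]. The mean-deviation risk measure ρ(X) = E[X] + γ·E[|X − E[X]|] on L¹(Ω, F, P) is monotone: X ≤ Y a.s. implies ρ(X) ≤ ρ(Y). -/
open MeasureTheory

/-- For γ ∈ [0, 1/2], the mean-deviation risk measure
ρ(X) = E[X] + γ·E[|X − E[X]|] is monotone on L¹. -/
theorem meanDeviation_monotone
    {Ω : Type*} [MeasurableSpace Ω] (μ : Measure Ω) [IsProbabilityMeasure μ]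
    (γ : ℝ) (hγ0 : 0 ≤ γ) (hγ : γ ≤ 1 / 2)
    (X Y : Ω → ℝ) (hX : Integrable X μ) (hY : Integrable Y μ)
    (hle : ∀ᵐ ω ∂μ, X ω ≤ Y ω) :
    (∫ ω, X ω ∂μ) + γ * ∫ ω, |X ω - ∫ ω', X ω' ∂μ| ∂μ ≤
      (∫ ω, Y ω ∂μ) + γ * ∫ ω, |Y ω - ∫ ω', Y ω' ∂μ| ∂μ := by
  set a := ∫ ω, X ω ∂μ with ha
  set b := ∫ ω, Y ω ∂μ with hb
  have hab : a ≤ b := integral_mono_ae hX hY hle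
  have hXi : Integrable (fun ω => |X ω - a|) μ := (hX.sub (integrable_const a)).abs
  have hYi : Integrable (fun ω => |Y ω - b|) μ := (hY.sub (integrable_const b)).abs
  have key : ∫ ω, |X ω - a| ∂μ ≤ ∫ ω, (|Y ω - b| + (Y ω - X ω) + (b - a)) ∂μ := by
    refine integral_mono_ae hXi (((hYi.add (hY.sub hX)).add (integrable_const _))) ?_
    filter_upwards [hle] with ω hω
    have h1 : |X ω - a| ≤ |Y ω - b| + |(X ω - a) - (Y ω - b)| := by
      have := abs_sub_abs_le_abs_sub (X ω - a) (Y ω - b)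
      linarith [abs_nonneg ((X ω - a) - (Y ω - b))]
    have h2 : |(X ω - a) - (Y ω - b)| ≤ (Y ω - X ω) + (b - a) := by
      rw [abs_le]; constructor <;> nlinarith [abs_nonneg (X ω - a)]
    linarith
  have heq : ∫ ω, (|Y ω - b| + (Y ω - X ω) + (b - a)) ∂μ
      = (∫ ω, |Y ω - b| ∂μ) + (b - a) + (b - a) := by
    have h0 : Integrable (fun ω => Y ω - X ω) μ := hY.sub hX
    have h1 : Integrable (fun ω => |Y ω - b| + (Y ω - X ω)) μ := hYi.add h0
    rw [integral_add h1 (integrable_const _), integral_add hYi h0,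
      integral_sub hY hX, integral_const]
    simp [← ha, ← hb]
  rw [heq] at key
  have h2 := mul_le_mul_of_nonneg_left key hγ0
  have h3 : 0 ≤ (1 - 2 * γ) * (b - a) :=
    mul_nonneg (by linarith) (sub_nonneg.2 hab)
  nlinarith [h2, h3]
end

section
/- Let 𝔄 = { m ∈ L^∞ : m = 1 + h − E[h] for some h ∈ L^∞ with ‖h‖_∞ ≤ γ }. Then for every X ∈ L¹(Ω, F, P), sup_{m ∈ 𝔄} ∫ m X dP = E[X] + γ·E[|X − E[X]|], i.e., the mean-deviation risk measure admits this dual representation. -/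
open MeasureTheory

/-- Dual representation of the mean-deviation risk measure: for
𝔄 = { m : m = 1 + h − E[h], h ∈ L^∞, ‖h‖_∞ ≤ γ }, one has
sup_{m ∈ 𝔄} ∫ m X dP = E[X] + γ·E[|X − E[X]|]. -/
theorem meanDeviation_dual_representation
    {Ω : Type*} [MeasurableSpace Ω] (μ : Measure Ω) [IsProbabilityMeasure μ]
    (γ : ℝ) (hγ0 : 0 ≤ γ)
    (𝔄 : Set (Ω → ℝ))
    (h𝔄 : 𝔄 = {m | ∃ h : Ω → ℝ, Measurable h ∧ (∀ᵐ ω ∂μ, |h ω| ≤ γ) ∧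
      m = fun ω => 1 + h ω - ∫ ω', h ω' ∂μ})
    (X : Ω → ℝ) (hXm : Measurable X) (hX : Integrable X μ) :
    sSup ((fun m => ∫ ω, m ω * X ω ∂μ) '' 𝔄) =
      (∫ ω, X ω ∂μ) + γ * ∫ ω, |X ω - ∫ ω', X ω' ∂μ| ∂μ := by
  set c : ℝ := ∫ ω, X ω ∂μ with hc
  have hY : Integrable (fun ω => X ω - c) μ := hX.sub (integrable_const c)
  have hYabs : Integrable (fun ω => |X ω - c|) μ := hY.abs
  -- generic value computation
  have key : ∀ h : Ω → ℝ, Measurable h → (∀ᵐ ω ∂μ, |h ω| ≤ γ) →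
      ∫ ω, (1 + h ω - ∫ ω', h ω' ∂μ) * X ω ∂μ
        = c + ∫ ω, h ω * (X ω - c) ∂μ := by
    intro h hm hb
    have hbd : ∀ᵐ ω ∂μ, ‖h ω‖ ≤ γ := hb
    have hInt : Integrable h μ := by
      have := (integrable_const (1 : ℝ)).bdd_mul (μ := μ)
        (hm.aestronglyMeasurable) hbd
      simpa using this
    have hhX : Integrable (fun ω => h ω * X ω) μ :=
      hX.bdd_mul hm.aestronglyMeasurable hbd
    have hhY : Integrable (fun ω => h ω * (X ω - c)) μ :=
      hY.bdd_mul hm.aestronglyMeasurable hbd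
    set e : ℝ := ∫ ω', h ω' ∂μ with he
    have expand : (fun ω => (1 + h ω - e) * X ω)
        = fun ω => X ω + (h ω * X ω - e * X ω) := by
      funext ω; ring
    have h1 : Integrable (fun ω => h ω * X ω - e * X ω) μ := hhX.sub (hX.const_mul e)
    have h2 : Integrable (fun ω => e * X ω) μ := hX.const_mul e
    have h3 : Integrable (fun ω => c * h ω) μ := hInt.const_mul c
    rw [expand, integral_add hX h1, integral_sub hhX h2, integral_const_mul]
    have expand2 : (fun ω => h ω * (X ω - c)) = fun ω => h ω * X ω - c * h ω := by
      funext ω; ring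
    rw [expand2, integral_sub hhX h3, integral_const_mul]
    ring
  apply IsGreatest.csSup_eq
  constructor
  · -- membership: h = γ on {X ≥ c}, -γ elsewhere
    set h : Ω → ℝ := fun ω => if 0 ≤ X ω - c then γ else -γ with hh
    have hm : Measurable h := by
      apply Measurable.ite _ measurable_const measurable_const
      exact measurableSet_le measurable_const (hXm.sub measurable_const)
    have hb : ∀ᵐ ω ∂μ, |h ω| ≤ γ := by
      refine Filter.Eventually.of_forall fun ω => ?_
      by_cases hω : 0 ≤ X ω - c
      · simp only [hh, if_pos hω]; rw [abs_of_nonneg hγ0]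
      · simp only [hh, if_neg hω]; rw [abs_neg, abs_of_nonneg hγ0]
    refine ⟨fun ω => 1 + h ω - ∫ ω', h ω' ∂μ, ?_, ?_⟩
    · rw [h𝔄]; exact ⟨h, hm, hb, rfl⟩
    · show ∫ ω, (1 + h ω - ∫ ω', h ω' ∂μ) * X ω ∂μ = c + γ * ∫ ω, |X ω - c| ∂μ
      rw [key h hm hb]
      have : (fun ω => h ω * (X ω - c)) = fun ω => γ * |X ω - c| := by
        funext ω
        by_cases hω : 0 ≤ X ω - c
        · simp only [hh, if_pos hω]; rw [abs_of_nonneg hω]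
        · push_neg at hω
          simp only [hh, if_neg (not_le.mpr hω)]; rw [abs_of_neg hω]; ring
      rw [this, integral_const_mul]
  · rintro b ⟨m, hmA, rfl⟩
    rw [h𝔄] at hmA
    obtain ⟨h, hm, hb, rfl⟩ := hmA
    show ∫ ω, (1 + h ω - ∫ ω', h ω' ∂μ) * X ω ∂μ ≤ c + γ * ∫ ω, |X ω - c| ∂μ
    rw [key h hm hb]
    have hhY : Integrable (fun ω => h ω * (X ω - c)) μ :=
      hY.bdd_mul hm.aestronglyMeasurable hb
    have hmono : ∫ ω, h ω * (X ω - c) ∂μ ≤ ∫ ω, γ * |X ω - c| ∂μ := by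
      apply integral_mono_ae hhY (hYabs.const_mul γ)
      filter_upwards [hb] with ω hω
      calc h ω * (X ω - c) ≤ |h ω * (X ω - c)| := le_abs_self _
        _ = |h ω| * |X ω - c| := abs_mul _ _
        _ ≤ γ * |X ω - c| := mul_le_mul_of_nonneg_right hω (abs_nonneg _)
    rw [integral_const_mul] at hmono
    linarith
end
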